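/- Let Q be a finite quiver with involution σ and duality structure (s, τ), let M be a self-dual representation of Q, and let U ⊆ M be a subrepresentation. Then: (a) the orthogonal U^⊥ is a subrepresentation of M; (b) dim_ℂ U^⊥_i = dim_ℂ M_i − dim_ℂ U_{σ(i)} for every i ∈ Q_0; (c) if U is isotropic, then the form ⟨x̄, ȳ⟩ := ⟨x, y⟩ on the quotient representation U^⊥/U is well defined and nondegenerate and makes M//U = U^⊥/U a self-dual representation (it satisfies conditions (i), (ii), (iii)); the dimension vector of M//U equals dim M − dim U − σ(dim U), where dim denotes dimension vectors. -/

import Mathlib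

open scoped BigOperators

/-- A finite quiver. -/
structure FinQuiver where
  V : Type
  A : Type
  [fintypeV : Fintype V]
  [fintypeA : Fintype A]
  [decEqV : DecidableEq V]
  [decEqA : DecidableEq A]
  src : A → V
  tgt : A → V

attribute [instance] FinQuiver.fintypeV FinQuiver.fintypeA FinQuiver.decEqV FinQuiver.decEqA

/-- A finite-dimensional complex representation of a quiver. -/
structure QRep (Q : FinQuiver) where
  carrier : Q.V → Type
  [acg : ∀ i, AddCommGroup (carrier i)]
  [mod : ∀ i, Module ℂ (carrier i)]
  [fd : ∀ i, FiniteDimensional ℂ (carrier i)]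
  map : ∀ a : Q.A, carrier (Q.src a) →ₗ[ℂ] carrier (Q.tgt a)

attribute [instance] QRep.acg QRep.mod QRep.fd

namespace QRep

variable {Q : FinQuiver}

/-- A family of subspaces of a representation. -/
abbrev SubFam (X : QRep Q) := ∀ i, Submodule ℂ (X.carrier i)

/-- The family of subspaces is a subrepresentation: it is stable under all structure maps. -/
def IsSubRep (X : QRep Q) (V : X.SubFam) : Prop :=
  ∀ a : Q.A, ∀ x ∈ V (Q.src a), X.map a x ∈ V (Q.tgt a)

/-- Dimension vector (with values in `ℤ`) of a family of subspaces. -/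
noncomputable def dimZ {X : QRep Q} (V : X.SubFam) : Q.V → ℤ :=
  fun i => (Module.finrank ℂ (V i) : ℤ)

/-- Dimension vector (with values in `ℤ`) of a representation. -/
noncomputable def dimVecZ (X : QRep Q) : Q.V → ℤ :=
  fun i => (Module.finrank ℂ (X.carrier i) : ℤ)

/-- The slope of a dimension vector with respect to a stability `θ`. -/
noncomputable def slope (θ : (Q.V → ℤ) →+ ℤ) (d : Q.V → ℤ) : ℚ :=
  (θ d : ℚ) / ((∑ i, d i : ℤ) : ℚ)

/-- A representation is semistable when every nonzero subrepresentation has slope at most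
the slope of the representation. -/
def Semistable (θ : (Q.V → ℤ) →+ ℤ) (X : QRep Q) : Prop :=
  ∀ V : X.SubFam, X.IsSubRep V → V ≠ ⊥ → slope θ (dimZ V) ≤ slope θ X.dimVecZ

/-- Cast along an equality of vertices. -/
def castEquiv (X : QRep Q) {i j : Q.V} (h : i = j) : X.carrier i ≃ₗ[ℂ] X.carrier j := by
  subst h; exact LinearEquiv.refl ℂ _

end QRep

/-- An involution of a quiver. -/
structure QInv (Q : FinQuiver) where
  onV : Q.V → Q.V
  onA : Q.A → Q.A
  invV : ∀ i, onV (onV i) = i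
  invA : ∀ a, onA (onA a) = a
  src_onA : ∀ a, Q.src (onA a) = onV (Q.tgt a)
  tgt_onA : ∀ a, Q.tgt (onA a) = onV (Q.src a)
  fix_onA : ∀ a, Q.tgt a = onV (Q.src a) → onA a = a

/-- A duality structure on a quiver with involution. -/
structure Duality (Q : FinQuiver) (σ : QInv Q) where
  s : Q.V → ℤ
  τ : Q.A → ℤ
  s_pm : ∀ i, s i = 1 ∨ s i = -1
  τ_pm : ∀ a, τ a = 1 ∨ τ a = -1
  s_inv : ∀ i, s (σ.onV i) = s i
  ττ : ∀ a, τ a * τ (σ.onA a) = s (Q.src a) * s (Q.tgt a)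

namespace QRep

variable {Q : FinQuiver}

/-- A stability is σ-compatible if `θ ∘ σ = -θ`. -/
def SigmaCompatible (σ : QInv Q) (θ : (Q.V → ℤ) →+ ℤ) : Prop :=
  ∀ d : Q.V → ℤ, θ (fun i => d (σ.onV i)) = - θ d

/-- The dual representation `S(U)`, with `S(U)_i = (U_{σ(i)})^*` and
`S(u)_α = τ_α ⬝ (u_{σ(α)})^∨`. -/
noncomputable def dualRep (σ : QInv Q) (D : Duality Q σ) (X : QRep Q) : QRep Q where
  carrier := fun i => Module.Dual ℂ (X.carrier (σ.onV i))
  map := fun a => (D.τ a : ℂ) •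
    (((X.castEquiv (σ.src_onA a)).dualMap.symm.toLinearMap).comp
      (((X.map (σ.onA a)).dualMap).comp
        ((X.castEquiv (σ.tgt_onA a)).dualMap.toLinearMap)))

end QRep

namespace QRep

variable {Q : FinQuiver}

/-- Bilinear forms on the total space `⊕ᵢ Xᵢ` of a representation. -/
abbrev Bilin (X : QRep Q) := (∀ i, X.carrier i) →ₗ[ℂ] (∀ i, X.carrier i) →ₗ[ℂ] ℂ

/-- Nondegeneracy of a bilinear form. -/
def Nondeg (X : QRep Q) (B : X.Bilin) : Prop := ∀ x, (∀ y, B x y = 0) → x = 0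

/-- Condition (i) for a self-dual representation: `M_i` and `M_j` are orthogonal
unless `i = σ(j)` (equivalently `j = σ(i)`). -/
def sdOrthBlocks (σ : QInv Q) (X : QRep Q) (B : X.Bilin) : Prop :=
  ∀ i j, j ≠ σ.onV i → ∀ (x : X.carrier i) (y : X.carrier j),
    B (Pi.single i x) (Pi.single j y) = 0

/-- Condition (ii) for a self-dual representation: `⟨x, x'⟩ = s_i ⟨x', x⟩` on
`M_i + M_{σ(i)}`. -/
def sdSymm (σ : QInv Q) (D : Duality Q σ) (X : QRep Q) (B : X.Bilin) : Prop :=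
  ∀ i (x : X.carrier i) (y : X.carrier (σ.onV i)),
    B (Pi.single i x) (Pi.single (σ.onV i) y)
      = (D.s i : ℂ) * B (Pi.single (σ.onV i) y) (Pi.single i x)

/-- Condition (iii) for a self-dual representation: `⟨m_α x, x'⟩ = τ_α ⟨x, m_{σ(α)} x'⟩`. -/
def sdArrow (σ : QInv Q) (D : Duality Q σ) (X : QRep Q) (B : X.Bilin) : Prop :=
  ∀ (a : Q.A) (x : X.carrier (Q.src a)) (y : X.carrier (σ.onV (Q.tgt a))),
    B (Pi.single (Q.tgt a) (X.map a x)) (Pi.single (σ.onV (Q.tgt a)) y)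
      = (D.τ a : ℂ) * B (Pi.single (Q.src a) x)
          (Pi.single (Q.tgt (σ.onA a)) (X.map (σ.onA a) (X.castEquiv (σ.src_onA a).symm y)))

/-- The bilinear form `B` makes `X` a self-dual representation. -/
def IsSelfDualForm (σ : QInv Q) (D : Duality Q σ) (X : QRep Q) (B : X.Bilin) : Prop :=
  Nondeg X B ∧ sdOrthBlocks σ X B ∧ sdSymm σ D X B ∧ sdArrow σ D X B

/-- The orthogonal `U^⊥` of a family of subspaces:
`U^⊥_i = {m ∈ M_i : ⟨m, x⟩ = 0 for all x ∈ U_{σ(i)}}`. -/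
noncomputable def orthFam (σ : QInv Q) (X : QRep Q) (B : X.Bilin) (U : X.SubFam) : X.SubFam :=
  fun i => ⨅ y : (U (σ.onV i)),
    LinearMap.ker ((B.comp (LinearMap.single ℂ X.carrier i)).flip
      (Pi.single (σ.onV i) (y : X.carrier (σ.onV i))))

/-- A family of subspaces is isotropic if `U ≤ U^⊥`. -/
def IsotropicFam (σ : QInv Q) (X : QRep Q) (B : X.Bilin) (U : X.SubFam) : Prop :=
  U ≤ orthFam σ X B U

/-- σ-semistability of a self-dual representation: every nonzero isotropic
subrepresentation has slope at most `0`. -/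
def SigmaSemistable (σ : QInv Q) (θ : (Q.V → ℤ) →+ ℤ) (X : QRep Q) (B : X.Bilin) : Prop :=
  ∀ U : X.SubFam, X.IsSubRep U → IsotropicFam σ X B U → U ≠ ⊥ → slope θ (dimZ U) ≤ 0

end QRep

/-!
By (i) and nondegeneracy, `B` restricts to a perfect pairing `M_i × M_{σ i} → ℂ`, so
`U^⊥_i` is the preimage of the annihilator of `U_{σ i}` under an isomorphism
`M_i ≃ (M_{σ i})^*`; this gives (b). Applying (b) twice together with the symmetry (ii) shows
`U^⊥⊥ = U`, which is exactly what makes the induced form on `U^⊥/U` well defined and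
nondegenerate. Condition (iii) moves arrows from one side of the pairing to the other, which
gives (a).
-/

namespace QRep

variable {Q : FinQuiver} {σ : QInv Q} {D : Duality Q σ} {M : QRep Q} {B : M.Bilin}

theorem single_castEquiv (M : QRep Q) {j j' : Q.V} (h : j = j') (x : M.carrier j) :
    Pi.single j' (M.castEquiv h x) = Pi.single j x := by
  subst h; rfl

theorem castEquiv_mem_iff {U : M.SubFam} {j j' : Q.V} (h : j = j') {x : M.carrier j} :
    M.castEquiv h x ∈ U j' ↔ x ∈ U j := by
  subst h; rfl

noncomputable def blockPairing (σ : QInv Q) (M : QRep Q) (B : M.Bilin) (i : Q.V) :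
    M.carrier i →ₗ[ℂ] Module.Dual ℂ (M.carrier (σ.onV i)) :=
  ((B.comp (LinearMap.single ℂ M.carrier i)).flip.comp
      (LinearMap.single ℂ M.carrier (σ.onV i))).flip

theorem mem_orthFam_iff {U : M.SubFam} {i : Q.V} {x : M.carrier i} :
    x ∈ orthFam σ M B U i ↔
      ∀ y ∈ U (σ.onV i), B (Pi.single i x) (Pi.single (σ.onV i) y) = 0 := by
  simp only [orthFam, Submodule.mem_iInf, LinearMap.mem_ker, Subtype.forall]
  rfl

theorem orthFam_eq_comap (U : M.SubFam) (i : Q.V) :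
    orthFam σ M B U i = (U (σ.onV i)).dualAnnihilator.comap (blockPairing σ M B i) := by
  ext x
  rw [mem_orthFam_iff, Submodule.mem_comap, Submodule.mem_dualAnnihilator]
  rfl

theorem blockPairing_injective (hN : Nondeg M B) (hO : sdOrthBlocks σ M B) (i : Q.V) :
    Function.Injective (blockPairing σ M B i) := by
  rw [injective_iff_map_eq_zero]
  intro x hx
  have hsingle : (Pi.single i x : ∀ j, M.carrier j) = 0 := by
    refine hN _ fun z => ?_
    rw [← Finset.univ_sum_single z, map_sum]
    refine Finset.sum_eq_zero fun j _ => ?_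
    by_cases hj : j = σ.onV i
    · subst hj; exact LinearMap.congr_fun hx (z _)
    · exact hO i j hj x (z j)
  simpa using congrFun hsingle i

theorem finrank_onV_eq (hN : Nondeg M B) (hO : sdOrthBlocks σ M B) (i : Q.V) :
    Module.finrank ℂ (M.carrier (σ.onV i)) = Module.finrank ℂ (M.carrier i) := by
  have hle : ∀ j, Module.finrank ℂ (M.carrier j) ≤ Module.finrank ℂ (M.carrier (σ.onV j)) :=
    fun j => by
      simpa only [Subspace.dual_finrank_eq] using
        LinearMap.finrank_le_finrank_of_injective (blockPairing_injective hN hO j)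
  have h := hle (σ.onV i)
  rw [σ.invV i] at h
  exact le_antisymm h (hle i)

noncomputable def blockPairingEquiv (hN : Nondeg M B) (hO : sdOrthBlocks σ M B) (i : Q.V) :
    M.carrier i ≃ₗ[ℂ] Module.Dual ℂ (M.carrier (σ.onV i)) :=
  (blockPairing σ M B i).linearEquivOfInjective (blockPairing_injective hN hO i)
    (by rw [Subspace.dual_finrank_eq, finrank_onV_eq hN hO])

theorem finrank_orthFam_add_finrank (hN : Nondeg M B) (hO : sdOrthBlocks σ M B)
    (U : M.SubFam) (i : Q.V) :
    Module.finrank ℂ (orthFam σ M B U i) + Module.finrank ℂ (U (σ.onV i))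
      = Module.finrank ℂ (M.carrier i) := by
  have hcomap : orthFam σ M B U i
      = (U (σ.onV i)).dualAnnihilator.comap (blockPairingEquiv hN hO i).toLinearMap :=
    orthFam_eq_comap U i
  rw [hcomap, Submodule.comap_equiv_eq_map_symm, LinearEquiv.finrank_map_eq, add_comm,
    Subspace.finrank_add_finrank_dualAnnihilator_eq, finrank_onV_eq hN hO]

theorem le_orthFam_orthFam (hS : sdSymm σ D M B) (U : M.SubFam) :
    U ≤ orthFam σ M B (orthFam σ M B U) := by
  intro i x hx
  rw [mem_orthFam_iff]
  intro y hy
  have hx' : M.castEquiv (σ.invV i).symm x ∈ U (σ.onV (σ.onV i)) :=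
    (castEquiv_mem_iff _).mpr hx
  rw [hS, ← single_castEquiv M (σ.invV i).symm x, mem_orthFam_iff.mp hy _ hx', mul_zero]

theorem orthFam_orthFam (hN : Nondeg M B) (hO : sdOrthBlocks σ M B) (hS : sdSymm σ D M B)
    (U : M.SubFam) : orthFam σ M B (orthFam σ M B U) = U := by
  funext i
  refine (Submodule.eq_of_le_of_finrank_le (le_orthFam_orthFam hS U i) ?_).symm
  have h₁ := finrank_orthFam_add_finrank hN hO (orthFam σ M B U) i
  have h₂ := finrank_orthFam_add_finrank hN hO U (σ.onV i)
  rw [σ.invV i, finrank_onV_eq hN hO] at h₂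
  omega

theorem isSubRep_orthFam (hA : sdArrow σ D M B) {U : M.SubFam} (hU : M.IsSubRep U) :
    M.IsSubRep (orthFam σ M B U) := by
  intro a x hx
  rw [mem_orthFam_iff]
  intro y hy
  have hmap : M.map (σ.onA a) (M.castEquiv (σ.src_onA a).symm y) ∈ U (Q.tgt (σ.onA a)) :=
    hU _ _ ((castEquiv_mem_iff _).mpr hy)
  rw [hA, ← single_castEquiv M (σ.tgt_onA a),
    mem_orthFam_iff.mp hx _ ((castEquiv_mem_iff _).mpr hmap), mul_zero]

theorem pairing_eq_of_sub_mem (hS : sdSymm σ D M B) {U : M.SubFam} {i : Q.V}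
    {x x' : M.carrier i} {y y' : M.carrier (σ.onV i)}
    (hx' : x' ∈ orthFam σ M B U i) (hy : y ∈ orthFam σ M B U (σ.onV i))
    (hdx : x - x' ∈ U i) (hdy : y - y' ∈ U (σ.onV i)) :
    B (Pi.single i x) (Pi.single (σ.onV i) y) = B (Pi.single i x') (Pi.single (σ.onV i) y') := by
  have hx : B (Pi.single i (x - x')) (Pi.single (σ.onV i) y) = 0 :=
    mem_orthFam_iff.mp (le_orthFam_orthFam hS U i hdx) y hy
  have hy' : B (Pi.single i x') (Pi.single (σ.onV i) (y - y')) = 0 :=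
    mem_orthFam_iff.mp hx' _ hdy
  simp only [Pi.single_sub, map_sub, LinearMap.sub_apply] at hx hy'
  rw [sub_eq_zero.mp hx, sub_eq_zero.mp hy']

end QRep

open QRep in
/-- Let `M` be a self-dual representation and `U ⊆ M` a
subrepresentation.  Then (a) `U^⊥` is a subrepresentation; (b) `dim U^⊥_i =
dim M_i - dim U_{σ(i)}`; (c) if `U` is isotropic, the form `⟨x̄, ȳ⟩ := ⟨x, y⟩` on
`U^⊥/U` is well defined and nondegenerate (making `M ∕∕ U = U^⊥/U` self-dual), and the
dimension vector of `M ∕∕ U` is `dim M - dim U - σ(dim U)`. -/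
theorem orth_subrep_and_selfdual_quotient (Q : FinQuiver) (σ : QInv Q) (D : Duality Q σ)
    (M : QRep Q) (B : M.Bilin) (hForm : IsSelfDualForm σ D M B)
    (U : M.SubFam) (hU : M.IsSubRep U) :
    -- (a) U^⊥ is a subrepresentation
    M.IsSubRep (orthFam σ M B U) ∧
    -- (b) dim U^⊥_i = dim M_i - dim U_{σ(i)}
    (∀ i, (Module.finrank ℂ (orthFam σ M B U i) : ℤ)
        = (Module.finrank ℂ (M.carrier i) : ℤ) - (Module.finrank ℂ (U (σ.onV i)) : ℤ)) ∧
    (IsotropicFam σ M B U →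
      -- (c) the induced form on U^⊥/U is well defined …
      ((∀ (i : Q.V) (x x' : M.carrier i) (y y' : M.carrier (σ.onV i)),
          x ∈ orthFam σ M B U i → x' ∈ orthFam σ M B U i →
          y ∈ orthFam σ M B U (σ.onV i) → y' ∈ orthFam σ M B U (σ.onV i) →
          x - x' ∈ U i → y - y' ∈ U (σ.onV i) →
          B (Pi.single i x) (Pi.single (σ.onV i) y)
            = B (Pi.single i x') (Pi.single (σ.onV i) y')) ∧
       -- … and nondegenerate on U^⊥/U
       (∀ (i : Q.V) (x : M.carrier i), x ∈ orthFam σ M B U i →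
          (∀ y ∈ orthFam σ M B U (σ.onV i),
            B (Pi.single i x) (Pi.single (σ.onV i) y) = 0) → x ∈ U i) ∧
       -- dimension vector of M ∕∕ U
       (∀ i, (Module.finrank ℂ (orthFam σ M B U i) : ℤ) - (Module.finrank ℂ (U i) : ℤ)
          = (Module.finrank ℂ (M.carrier i) : ℤ) - (Module.finrank ℂ (U i) : ℤ)
            - (Module.finrank ℂ (U (σ.onV i)) : ℤ)))) := by
  obtain ⟨hN, hO, hS, hA⟩ := hForm
  have hdim : ∀ i, (Module.finrank ℂ (orthFam σ M B U i) : ℤ)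
      = (Module.finrank ℂ (M.carrier i) : ℤ) - (Module.finrank ℂ (U (σ.onV i)) : ℤ) := fun i => by
    rw [← finrank_orthFam_add_finrank hN hO U i]
    push_cast
    ring
  refine ⟨isSubRep_orthFam hA hU, hdim, fun _ => ⟨?_, ?_, fun i => by rw [hdim]; ring⟩⟩
  · intro i x x' y y' _ hx' hy _ hdx hdy
    exact pairing_eq_of_sub_mem hS hx' hy hdx hdy
  · intro i x _ hperp
    rw [← orthFam_orthFam hN hO hS U]
    exact mem_orthFam_iff.mpr hperp
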